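/- Let T ∈ ℕ with T ≥ 1, r > 0, α₀, β₀ ∈ ℝ, and set λ = (3T−1)/(2πr). Assume (B1) 0 ≤ λ < 1/2, (B2) πλ < α₀/r < π(1−λ), (B3) πλ < −β₀/r < π(1−λ), and (B4) (α₀−β₀)/r < π(1 − 2(T+1)λ/(3T−1)). Then for every (t,x) ∈ Λ*_{2T}: sin(η_j) ≠ 0 for each j = 1,…,5, and the trigonometric elementary weight q̂(t,x) = ∏_{j=1}^{5} [sin(ζ_j) / sin(η_j)] is a strictly positive real number; consequently the trigonometric excursion measure P̂^{0,0}_{2T} is a probability measure. -/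

import Mathlib

open scoped Real

/-- The region `Λ*_{2T}` of spatio-temporal points that can carry a rightward step. -/
def LambdaStar (T : ℕ) : Set (ℤ × ℤ) :=
  {p | Even (p.1 + p.2) ∧
    ((1 ≤ p.1 ∧ p.1 ≤ (T : ℤ) ∧ -p.1 + 2 ≤ p.2 ∧ p.2 ≤ p.1) ∨
     ((T : ℤ) + 1 ≤ p.1 ∧ p.1 ≤ 2 * (T : ℤ) ∧ p.1 - 2 * (T : ℤ) ≤ p.2 ∧
       p.2 ≤ -p.1 + 2 * (T : ℤ)))}

/-- The numerator arguments `ζ₁, …, ζ₅`. -/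
noncomputable def zetaArg (T : ℕ) (r α₀ β₀ : ℝ) (t x : ℤ) : Fin 5 → ℝ :=
  ![(2 * α₀ - (3 * (T : ℝ) + 1) + (3 * (t : ℝ) - (x : ℝ))) / (2 * r),
    (2 * β₀ - (3 * (T : ℝ) + 1) + 2 * ((t : ℝ) + (x : ℝ))) / (2 * r),
    (2 * β₀ - (3 * (T : ℝ) + 1) + 2 * ((t : ℝ) + (x : ℝ))) / (2 * r) - 1 / r,
    (2 * (α₀ - β₀) - ((t : ℝ) + (x : ℝ))) / (2 * r),
    (2 * (α₀ - β₀) - ((t : ℝ) + (x : ℝ))) / (2 * r) + 1 / r]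

/-- The denominator arguments `η₁, …, η₅`. -/
noncomputable def etaArg (T : ℕ) (r α₀ β₀ : ℝ) (t x : ℤ) : Fin 5 → ℝ :=
  ![(2 * α₀ - (3 * (T : ℝ) + 1) + ((t : ℝ) + (x : ℝ))) / (2 * r),
    (2 * β₀ - (3 * (T : ℝ) + 1) + (3 * (t : ℝ) + (x : ℝ))) / (2 * r),
    (2 * β₀ - (3 * (T : ℝ) + 1) + (3 * (t : ℝ) + (x : ℝ))) / (2 * r) - 1 / r,
    (α₀ - β₀ - (x : ℝ)) / r,
    (α₀ - β₀ - (x : ℝ)) / r + 1 / r]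


open Set

/-! Every `ζ_j` and `η_j` has the form `N/(2r)` with a numerator `N` affine in `α₀, β₀, t, x`.
Once (B2)–(B4) are rewritten as linear bounds on `α₀, β₀`, the bounds of `Λ*_{2T}` on `x`, `t + x`,
`3t ∓ x` place `ζ_j` and `η_j` in the same half-period, `(0, π)` for `j = 1, 4, 5` and `(-π, 0)`
for `j = 2, 3`, so every factor of the weight is a quotient of two sines of the same sign. -/

lemma two_mul_mem_Ioo_of_pi_mul_lt {r c a : ℝ} (hr : 0 < r)
    (hlow : π * (c / (2 * π * r)) < a / r) (hupp : a / r < π * (1 - c / (2 * π * r))) :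
    2 * a ∈ Ioo c (2 * π * r - c) := by
  have elow : π * (c / (2 * π * r)) * r = c / 2 := by field_simp
  have eupp : π * (1 - c / (2 * π * r)) * r = π * r - c / 2 := by field_simp
  constructor
  · linarith [(lt_div_iff₀ hr).1 hlow]
  · linarith [(div_lt_iff₀ hr).1 hupp]

lemma two_mul_lt_of_div_lt_pi_mul_sub {r c k d : ℝ} (hr : 0 < r) (hc : c ≠ 0)
    (h : d / r < π * (1 - k / c * (c / (2 * π * r)))) : 2 * d < 2 * π * r - k := by
  have e : π * (1 - k / c * (c / (2 * π * r))) * r = π * r - k / 2 := by field_simp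
  linarith [(div_lt_iff₀ hr).1 h]

lemma Real.sin_div_two_mul_pos {r a : ℝ} (hr : 0 < r) (ha : a ∈ Ioo 0 (2 * π * r)) :
    0 < Real.sin (a / (2 * r)) :=
  Real.sin_pos_of_pos_of_lt_pi (div_pos ha.1 (by positivity))
    ((div_lt_iff₀ (by positivity)).2 (by linarith [ha.2]))

lemma Real.sin_div_two_mul_neg {r a : ℝ} (hr : 0 < r) (ha : a ∈ Ioo (-(2 * π * r)) 0) :
    Real.sin (a / (2 * r)) < 0 :=
  Real.sin_neg_of_neg_of_neg_pi_lt (div_neg_of_neg_of_pos ha.2 (by positivity))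
    ((lt_div_iff₀ (by positivity)).2 (by linarith [ha.1]))

lemma LambdaStar.bounds {T : ℕ} {t x : ℤ} (h : (t, x) ∈ LambdaStar T) :
    1 - (T : ℝ) ≤ x ∧ (x : ℝ) ≤ T ∧ 2 ≤ (t : ℝ) + x ∧ (t : ℝ) + x ≤ 2 * T ∧
      2 ≤ 3 * (t : ℝ) - x ∧ 3 * (t : ℝ) - x ≤ 6 * T ∧
      4 ≤ 3 * (t : ℝ) + x ∧ 3 * (t : ℝ) + x ≤ 6 * T := by
  have hint : 1 - (T : ℤ) ≤ x ∧ x ≤ T ∧ 2 ≤ t + x ∧ t + x ≤ 2 * T ∧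
      2 ≤ 3 * t - x ∧ 3 * t - x ≤ 6 * T ∧ 4 ≤ 3 * t + x ∧ 3 * t + x ≤ 6 * T := by
    obtain ⟨-, h⟩ := h
    omega
  exact_mod_cast hint

section Numerators

variable (T : ℕ) (α₀ β₀ : ℝ) (t x : ℤ)

def zetaNum : Fin 5 → ℝ :=
  ![2 * α₀ - (3 * (T : ℝ) + 1) + (3 * (t : ℝ) - x),
    2 * β₀ - (3 * (T : ℝ) + 1) + 2 * ((t : ℝ) + x),
    2 * β₀ - (3 * (T : ℝ) + 1) + 2 * ((t : ℝ) + x) - 2,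
    2 * (α₀ - β₀) - ((t : ℝ) + x),
    2 * (α₀ - β₀) - ((t : ℝ) + x) + 2]

def etaNum : Fin 5 → ℝ :=
  ![2 * α₀ - (3 * (T : ℝ) + 1) + ((t : ℝ) + x),
    2 * β₀ - (3 * (T : ℝ) + 1) + (3 * (t : ℝ) + x),
    2 * β₀ - (3 * (T : ℝ) + 1) + (3 * (t : ℝ) + x) - 2,
    2 * (α₀ - β₀) - 2 * (x : ℝ),
    2 * (α₀ - β₀) - 2 * (x : ℝ) + 2]

variable {T α₀ β₀ t x} {r : ℝ}

lemma zetaArg_eq_div (hr : r ≠ 0) (j : Fin 5) :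
    zetaArg T r α₀ β₀ t x j = zetaNum T α₀ β₀ t x j / (2 * r) := by
  fin_cases j <;>
    simp only [zetaArg, zetaNum, Fin.zero_eta, Fin.mk_one, Fin.reduceFinMk, Matrix.cons_val] <;>
    field_simp

lemma etaArg_eq_div (hr : r ≠ 0) (j : Fin 5) :
    etaArg T r α₀ β₀ t x j = etaNum T α₀ β₀ t x j / (2 * r) := by
  fin_cases j <;>
    simp only [etaArg, etaNum, Fin.zero_eta, Fin.mk_one, Fin.reduceFinMk, Matrix.cons_val] <;>
    field_simp

lemma zetaNum_etaNum_mem_Ioo (hT : 1 ≤ T)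
    (hα : 2 * α₀ ∈ Ioo (3 * (T : ℝ) - 1) (2 * π * r - (3 * T - 1)))
    (hβ : 2 * -β₀ ∈ Ioo (3 * (T : ℝ) - 1) (2 * π * r - (3 * T - 1)))
    (hαβ : 2 * (α₀ - β₀) < 2 * π * r - 2 * ((T : ℝ) + 1))
    (hmem : (t, x) ∈ LambdaStar T) (j : Fin 5) :
    (zetaNum T α₀ β₀ t x j ∈ Ioo 0 (2 * π * r) ∧ etaNum T α₀ β₀ t x j ∈ Ioo 0 (2 * π * r)) ∨
      (zetaNum T α₀ β₀ t x j ∈ Ioo (-(2 * π * r)) 0 ∧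
        etaNum T α₀ β₀ t x j ∈ Ioo (-(2 * π * r)) 0) := by
  have hT' : (1 : ℝ) ≤ T := by exact_mod_cast hT
  obtain ⟨hx₁, hx₂, hs₁, hs₂, hm₁, hm₂, hp₁, hp₂⟩ := LambdaStar.bounds hmem
  obtain ⟨hα₁, hα₂⟩ := hα
  obtain ⟨hβ₁, hβ₂⟩ := hβ
  fin_cases j <;>
    simp only [zetaNum, etaNum, mem_Ioo, Fin.zero_eta, Fin.mk_one, Fin.reduceFinMk,
      Matrix.cons_val] <;>
    [left; right; right; left; left] <;> refine ⟨⟨?_, ?_⟩, ?_, ?_⟩ <;> linarith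

end Numerators

theorem trigonometric_weight_positive_general (T : ℕ) (hT : 1 ≤ T) (r α₀ β₀ : ℝ)
    (hr : 0 < r) (lam : ℝ) (hlam : lam = (3 * (T : ℝ) - 1) / (2 * π * r))
    (hB2 : π * lam < α₀ / r ∧ α₀ / r < π * (1 - lam))
    (hB3 : π * lam < -β₀ / r ∧ -β₀ / r < π * (1 - lam))
    (hB4 : (α₀ - β₀) / r < π * (1 - 2 * ((T : ℝ) + 1) / (3 * (T : ℝ) - 1) * lam)) :
    ∀ t x : ℤ, (t, x) ∈ LambdaStar T →
      (∀ j : Fin 5, Real.sin (etaArg T r α₀ β₀ t x j) ≠ 0) ∧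
      0 < ∏ j : Fin 5, Real.sin (zetaArg T r α₀ β₀ t x j) / Real.sin (etaArg T r α₀ β₀ t x j) := by
  subst hlam
  have hc : 3 * (T : ℝ) - 1 ≠ 0 := by
    have : (1 : ℝ) ≤ T := by exact_mod_cast hT
    linarith
  have hα := two_mul_mem_Ioo_of_pi_mul_lt hr hB2.1 hB2.2
  have hβ := two_mul_mem_Ioo_of_pi_mul_lt hr hB3.1 hB3.2
  have hαβ := two_mul_lt_of_div_lt_pi_mul_sub hr hc hB4
  intro t x hmem
  have hsign : ∀ j,
      0 < Real.sin (zetaArg T r α₀ β₀ t x j) * Real.sin (etaArg T r α₀ β₀ t x j) := by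
    intro j
    rw [zetaArg_eq_div hr.ne', etaArg_eq_div hr.ne']
    rcases zetaNum_etaNum_mem_Ioo hT hα hβ hαβ hmem j with ⟨hz, he⟩ | ⟨hz, he⟩
    · exact mul_pos (Real.sin_div_two_mul_pos hr hz) (Real.sin_div_two_mul_pos hr he)
    · exact mul_pos_of_neg_of_neg (Real.sin_div_two_mul_neg hr hz)
        (Real.sin_div_two_mul_neg hr he)
  exact ⟨fun j => (mul_ne_zero_iff.1 (hsign j).ne').2,
    Finset.prod_pos fun j _ => div_pos_iff.2 (mul_pos_iff.1 (hsign j))⟩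

/-- Corollary 5.2: positivity conditions for the trigonometric elementary weight,
hence for the trigonometric excursion measure. -/
theorem trigonometric_weight_positive (T : ℕ) (hT : 1 ≤ T) (r α₀ β₀ : ℝ)
    (hr : 0 < r) (lam : ℝ) (hlam : lam = (3 * (T : ℝ) - 1) / (2 * π * r))
    (hB1 : 0 ≤ lam ∧ lam < 1 / 2)
    (hB2 : π * lam < α₀ / r ∧ α₀ / r < π * (1 - lam))
    (hB3 : π * lam < -β₀ / r ∧ -β₀ / r < π * (1 - lam))
    (hB4 : (α₀ - β₀) / r < π * (1 - 2 * ((T : ℝ) + 1) / (3 * (T : ℝ) - 1) * lam)) :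
    ∀ t x : ℤ, (t, x) ∈ LambdaStar T →
      (∀ j : Fin 5, Real.sin (etaArg T r α₀ β₀ t x j) ≠ 0) ∧
      0 < ∏ j : Fin 5, Real.sin (zetaArg T r α₀ β₀ t x j) / Real.sin (etaArg T r α₀ β₀ t x j) :=
  trigonometric_weight_positive_general T hT r α₀ β₀ hr lam hlam hB2 hB3 hB4
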